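/- arXiv:2001.00165 — 2 statements merged into one kernel-verified Lean document; each statement's English description precedes it below -/
import Mathlib

section
/- Let p be an odd prime and k a field of characteristic p. Then (x² + y²z²)^{p−1} does not lie in the ideal (x^p, y^p, z^p) of the formal power series ring k[[x,y,z]]. (The monomial x^{p−1}y^{p−1}z^{p−1} occurs in the expansion with coefficient equal to the binomial coefficient C(p−1,(p−1)/2), which is nonzero modulo p.) -/
/-!
Fedder's non-membership is detected by a single coefficient. Every element of
`(x^p, y^p, z^p)` has zero coefficient at each monomial whose exponents are all `< p`, in particular
at `(xyz)^(p-1)`. Writing `p - 1 = 2m`, the binomial theorem gives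
`(x² + y²z²)^(2m) = ∑ⱼ C(2m, j) x^(2j) (yz)^(2(2m-j))`, whose coefficient at `(xyz)^(2m)` is the
`j = m` term `C(2m, m)`; this is nonzero in `k` because it divides `(p-1)!`, which is prime to `p`.
-/

open MvPowerSeries Finsupp Finset

theorem Nat.Prime.not_dvd_choose_of_lt {p n k : ℕ} (hp : p.Prime) (hn : n < p) (hk : k ≤ n) :
    ¬ p ∣ n.choose k := by
  have hdvd : n.choose k ∣ n.factorial :=
    Dvd.intro _ (by rw [← mul_assoc]; exact Nat.choose_mul_factorial_mul_factorial hk)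
  rw [← hp.coprime_iff_not_dvd]
  exact (hp.coprime_factorial_of_lt hn).coprime_dvd_right hdvd

namespace MvPowerSeries

variable {σ R : Type*} [CommSemiring R]

theorem coeff_mul_X_pow_eq_zero {e : σ →₀ ℕ} {i : σ} {n : ℕ} (h : e i < n)
    (a : MvPowerSeries σ R) : coeff e (a * X i ^ n) = 0 := by
  classical
  rw [X_pow_eq, coeff_mul_monomial, if_neg]
  intro hle
  have := hle i
  simp only [single_eq_same] at this
  omega

theorem coeff_eq_zero_of_mem_span_X_pow [Fintype σ] {n : ℕ} {e : σ →₀ ℕ} (he : ∀ i, e i < n)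
    {f : MvPowerSeries σ R} (hf : f ∈ Ideal.span (Set.range fun i => X i ^ n)) :
    coeff e f = 0 := by
  obtain ⟨c, rfl⟩ := Ideal.mem_span_range_iff_exists_fun.mp hf
  rw [map_sum]
  exact Finset.sum_eq_zero fun i _ => coeff_mul_X_pow_eq_zero (he i) (c i)

theorem X_sq_add_X_sq_mul_X_sq_pow (n : ℕ) :
    (X 0 ^ 2 + X 1 ^ 2 * X 2 ^ 2 : MvPowerSeries (Fin 3) R) ^ n =
      ∑ j ∈ range (n + 1),
        monomial (single 0 (2 * j) + single 1 (2 * (n - j)) + single 2 (2 * (n - j)))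
          (n.choose j : R) := by
  rw [add_pow]
  refine sum_congr rfl fun j _ => ?_
  rw [mul_pow, ← pow_mul, ← pow_mul, ← pow_mul, X_pow_eq, X_pow_eq, X_pow_eq,
    monomial_mul_monomial, monomial_mul_monomial, ← map_natCast (C (σ := Fin 3) (R := R)),
    ← monomial_zero_eq_C_apply, monomial_mul_monomial]
  simp only [one_mul, mul_one, add_zero, add_assoc, mul_comm 2]

theorem coeff_X_sq_add_X_sq_mul_X_sq_pow (m : ℕ) :
    coeff (single 0 (2 * m) + single 1 (2 * m) + single 2 (2 * m))
        ((X 0 ^ 2 + X 1 ^ 2 * X 2 ^ 2 : MvPowerSeries (Fin 3) R) ^ (2 * m)) =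
      ((2 * m).choose m : R) := by
  classical
  rw [X_sq_add_X_sq_mul_X_sq_pow, map_sum, Finset.sum_eq_single m]
  · rw [coeff_monomial, if_pos (by congr 3 <;> omega)]
  · intro j _ hjm
    rw [coeff_monomial, if_neg]
    intro h
    have := DFunLike.congr_fun h 0
    simp only [Finsupp.coe_add, Pi.add_apply, single_eq_same, ne_eq, Fin.reduceEq, not_false_eq_true,
      single_eq_of_ne] at this
    omega
  · intro hm
    exact absurd (mem_range.mpr (by omega)) hm

end MvPowerSeries

theorem stmt_2 (p : ℕ) (hp : p.Prime) (hodd : Odd p)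
    {k : Type*} [Field k] [CharP k p] :
    ((X 0 ^ 2 + X 1 ^ 2 * X 2 ^ 2 : MvPowerSeries (Fin 3) k) ^ (p - 1))
      ∉ Ideal.span ({X 0 ^ p, X 1 ^ p, X 2 ^ p} : Set (MvPowerSeries (Fin 3) k)) := by
  obtain ⟨m, rfl⟩ := hodd
  intro hmem
  have hspan : ({X 0 ^ (2 * m + 1), X 1 ^ (2 * m + 1), X 2 ^ (2 * m + 1)} :
      Set (MvPowerSeries (Fin 3) k)) ⊆ Set.range fun i => X i ^ (2 * m + 1) := by
    rintro _ (rfl | rfl | rfl) <;> exact ⟨_, rfl⟩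
  have hcoeff := coeff_eq_zero_of_mem_span_X_pow
    (e := single 0 (2 * m) + single 1 (2 * m) + single 2 (2 * m))
    (by intro i; fin_cases i <;> simp) (Ideal.span_mono hspan hmem)
  rw [Nat.add_sub_cancel, coeff_X_sq_add_X_sq_mul_X_sq_pow,
    CharP.cast_eq_zero_iff k (2 * m + 1)] at hcoeff
  exact hp.not_dvd_choose_of_lt (by omega) (by omega) hcoeff
end

section
/- Let p be an odd prime and k a field of characteristic p. Then (x² + y(y − z²)²)^{p−1} does not lie in the ideal (x^p, y^p, z^p) of the formal power series ring k[[x,y,z]]. -/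
/-! The monomial `x^(p-1) y^(p-1) z^(p-1)` has every exponent below `p`, so its coefficient
vanishes on the ideal `(x^p, y^p, z^p)`. Writing `p - 1 = 2m` and expanding binomially, the only
way to reach it is to take `x²` from `m` of the `2m` factors and then `y` from `m` of the factors
of `(y - z²)^(2m)`, so the coefficient is `(-1)^m C(2m, m)²`, nonzero in characteristic `p`
because `2m < p`. -/

open MvPowerSeries Finset Finsupp

theorem MvPowerSeries.coeff_eq_zero_of_mem_span_X_pow_s4 {σ R : Type*} [Fintype σ] [CommSemiring R]
    {n : ℕ} {d : σ →₀ ℕ} (hd : ∀ i, d i < n) {f : MvPowerSeries σ R}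
    (hf : f ∈ Ideal.span (Set.range fun i => (X i : MvPowerSeries σ R) ^ n)) :
    coeff d f = 0 := by
  obtain ⟨c, rfl⟩ := Ideal.mem_span_range_iff_exists_fun.mp hf
  rw [map_sum]
  exact sum_eq_zero fun i _ => X_pow_dvd_iff.mp (dvd_mul_left _ _) d (hd i)

theorem Nat.cast_choose_ne_zero_of_lt {R : Type*} [AddMonoidWithOne R] {p : ℕ} [CharP R p]
    (hp : p.Prime) {n k : ℕ} (hn : n < p) (hk : k ≤ n) : (n.choose k : R) ≠ 0 := by
  rw [Ne, CharP.cast_eq_zero_iff R p]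
  exact hp.coprime_iff_not_dvd.mp (hp.coprime_choose_of_lt hn hk)

theorem MvPowerSeries.monomial_single_add_single_add_single {σ R : Type*} [CommSemiring R]
    (i j l : σ) (a b c : ℕ) (r : R) :
    monomial (single i a + single j b + single l c) r = C r * X i ^ a * X j ^ b * X l ^ c := by
  simp only [X_pow_eq, ← monomial_zero_eq_C_apply, monomial_mul_monomial, zero_add, mul_one]

theorem Finsupp.single_add_single_add_single_inj {a b c a' b' c' : ℕ} :
    single (0 : Fin 3) a + single 1 b + single 2 c = single 0 a' + single 1 b' + single 2 c' ↔
      a = a' ∧ b = b' ∧ c = c' := by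
  simp [Finsupp.ext_iff, Fin.forall_fin_succ]

section

variable {R : Type*} [CommRing R]

theorem X_sq_add_X_mul_X_sub_X_sq_sq_pow_eq_sum (n : ℕ) :
    (X 0 ^ 2 + X 1 * (X 1 - X 2 ^ 2) ^ 2 : MvPowerSeries (Fin 3) R) ^ n =
      ∑ i ∈ range (n + 1), ∑ j ∈ range (2 * (n - i) + 1),
        monomial (single 0 (2 * i) + single 1 (n - i + j) + single 2 (2 * (2 * (n - i) - j)))
          ((-1 : R) ^ j * ((n.choose i * (2 * (n - i)).choose j : ℕ) : R)) := by
  rw [add_pow]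
  refine sum_congr rfl fun i _ => ?_
  rw [mul_pow, ← pow_mul, ← pow_mul, sub_pow, Finset.mul_sum, Finset.mul_sum, Finset.sum_mul]
  refine sum_congr rfl fun j _ => ?_
  rw [monomial_single_add_single_add_single, pow_add _ j, (even_two_mul _).neg_one_pow]
  simp only [map_mul, map_pow, map_neg, map_one, map_natCast, Nat.cast_mul]
  ring

theorem coeff_X_sq_add_X_mul_X_sub_X_sq_sq_pow (m : ℕ) :
    coeff (single 0 (2 * m) + single 1 (2 * m) + single 2 (2 * m))
      ((X 0 ^ 2 + X 1 * (X 1 - X 2 ^ 2) ^ 2 : MvPowerSeries (Fin 3) R) ^ (2 * m)) =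
      (-1) ^ m * ((2 * m).choose m : R) ^ 2 := by
  classical
  have hexp : ∀ i j, single (0 : Fin 3) (2 * m) + single 1 (2 * m) + single 2 (2 * m) =
      single 0 (2 * i) + single 1 (2 * m - i + j) + single 2 (2 * (2 * (2 * m - i) - j)) ↔
      i = m ∧ j = m := by
    intro i j
    rw [single_add_single_add_single_inj]
    omega
  simp only [X_sq_add_X_mul_X_sub_X_sq_sq_pow_eq_sum, map_sum, coeff_monomial, hexp, ite_and,
    sum_ite_irrel, sum_const_zero, Finset.sum_ite_eq', mem_range]
  rw [if_pos (by omega), if_pos (by omega), show 2 * (2 * m - m) = 2 * m by omega]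
  push_cast
  ring

end

theorem stmt_4 (p : ℕ) (hp : p.Prime) (hodd : Odd p)
    {k : Type*} [Field k] [CharP k p] :
    ((X 0 ^ 2 + X 1 * (X 1 - X 2 ^ 2) ^ 2 : MvPowerSeries (Fin 3) k) ^ (p - 1))
      ∉ Ideal.span ({X 0 ^ p, X 1 ^ p, X 2 ^ p} : Set (MvPowerSeries (Fin 3) k)) := by
  obtain ⟨m, rfl⟩ := hodd
  intro hmem
  have hspan : Ideal.span ({X 0 ^ (2 * m + 1), X 1 ^ (2 * m + 1), X 2 ^ (2 * m + 1)} :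
      Set (MvPowerSeries (Fin 3) k)) ≤ Ideal.span (Set.range fun i => X i ^ (2 * m + 1)) :=
    Ideal.span_mono (by rintro _ (rfl | rfl | rfl) <;> exact ⟨_, rfl⟩)
  have hd : ∀ i, (single 0 (2 * m) + single 1 (2 * m) + single 2 (2 * m) : Fin 3 →₀ ℕ) i
      < 2 * m + 1 := by
    intro i
    fin_cases i <;> simp
  have hcoeff := coeff_eq_zero_of_mem_span_X_pow_s4 hd (hspan hmem)
  rw [Nat.add_sub_cancel, coeff_X_sq_add_X_mul_X_sub_X_sq_sq_pow] at hcoeff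
  exact mul_ne_zero (pow_ne_zero _ (neg_ne_zero.mpr one_ne_zero))
    (pow_ne_zero _ (Nat.cast_choose_ne_zero_of_lt hp (by omega) (by omega))) hcoeff
end
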